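/- arXiv:2511.11566 — 6 statements merged into one kernel-verified Lean document; each statement's English description precedes it below -/
import Mathlib

section
/- Fix a ∈ ℝ and M > a. The supremum, over all pairs (μ, σ) ∈ ℝ × (0, ∞) such that the left-truncated Gaussian distribution on [a, ∞) with parameters μ, σ has mean M, of the variance of that distribution, equals (M − a)²; moreover this supremum is not attained. -/
/-!
Substituting `x = μ + σ t` turns every integral into one against the standard Gaussian
`φ(t) = exp (-t²/2)` over `(α, ∞)`, `α = (a - μ)/σ`. With `Q(α) = ∫_α^∞ φ` and the inverse Mills
ratio `λ = φ(α)/Q(α)`, the mean is `μ + σλ` and the variance `σ²(1 + αλ - λ²)`, so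
`Var/(M - a)² = (1 + αλ - λ²)/(λ - α)²` depends on `α` alone, and for `M > a` every `α` is realised
by a suitable `σ`. This ratio is `< 1` exactly when `λ > (3α + √(α² + 8))/4` (Sampford's
inequality), and it tends to `1` as `α → ∞` by the continued-fraction bound
`λ < α + (α² + 3)/(α³ + 5α)`.
Both bounds on `λ` compare `Q` with `h φ` for a super- resp. subsolution `h` of the Mills-ratio
equation `R' = tR - 1` that vanishes at infinity.
-/

open MeasureTheory Real Filter Set

/-- The error function. -/
noncomputable def erf (x : ℝ) : ℝ :=
  (2 / Real.sqrt Real.pi) * ∫ t in (0:ℝ)..x, Real.exp (-t ^ 2)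

/-- `ξ(r) = erf(r/√2) + 1`. -/
noncomputable def xi (r : ℝ) : ℝ := erf (r / Real.sqrt 2) + 1

/-- Normalizing constant of the left-truncated Gaussian on `[a, ∞)` with parameters `μ, σ`. -/
noncomputable def lZ (a μ σ : ℝ) : ℝ :=
  ∫ x in Set.Ici a, Real.exp (-(x - μ) ^ 2 / (2 * σ ^ 2))

/-- Mean of the left-truncated Gaussian on `[a, ∞)` with parameters `μ, σ`. -/
noncomputable def lMean (a μ σ : ℝ) : ℝ :=
  (∫ x in Set.Ici a, x * Real.exp (-(x - μ) ^ 2 / (2 * σ ^ 2))) / lZ a μ σ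

/-- Variance of the left-truncated Gaussian on `[a, ∞)` with parameters `μ, σ`. -/
noncomputable def lVar (a μ σ : ℝ) : ℝ :=
  (∫ x in Set.Ici a, (x - lMean a μ σ) ^ 2 * Real.exp (-(x - μ) ^ 2 / (2 * σ ^ 2))) / lZ a μ σ

open Topology

noncomputable def gauss (t : ℝ) : ℝ := exp (-t ^ 2 / 2)

noncomputable def gaussTail (x : ℝ) : ℝ := ∫ t in Ioi x, gauss t

noncomputable def invMillsRatio (x : ℝ) : ℝ := gauss x / gaussTail x

lemma gauss_pos (t : ℝ) : 0 < gauss t := exp_pos _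

lemma integrable_gauss : Integrable gauss := by
  convert integrable_exp_neg_mul_sq (by norm_num : (0:ℝ) < 1 / 2) using 2 with t
  rw [gauss]; ring_nf

lemma integrable_mul_gauss : Integrable fun t => t * gauss t := by
  convert integrable_mul_exp_neg_mul_sq (by norm_num : (0:ℝ) < 1 / 2) using 2 with t
  rw [gauss]; ring_nf

lemma hasDerivAt_gauss (x : ℝ) : HasDerivAt gauss (-x * gauss x) x := by
  have h : HasDerivAt (fun t : ℝ => -t ^ 2 / 2) (-x) x := by
    simpa using ((hasDerivAt_pow 2 x).neg.div_const 2).congr_deriv (by ring)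
  exact h.exp.congr_deriv (by rw [gauss]; ring)

lemma tendsto_gauss_atTop : Tendsto gauss atTop (𝓝 0) := by
  have : Tendsto (fun t : ℝ => -t ^ 2 / 2) atTop atBot :=
    (tendsto_neg_atTop_atBot.comp (tendsto_pow_atTop two_ne_zero)).atBot_div_const two_pos
  exact tendsto_exp_atBot.comp this

lemma tendsto_mul_gauss_atTop : Tendsto (fun t => t * gauss t) atTop (𝓝 0) := by
  refine tendsto_of_tendsto_of_tendsto_of_le_of_le' tendsto_const_nhds
    (by simpa using tendsto_pow_mul_exp_neg_atTop_nhds_zero 1) ?_ ?_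
  · filter_upwards [eventually_ge_atTop 0] with t ht
    exact mul_nonneg ht (gauss_pos t).le
  · filter_upwards [eventually_ge_atTop 2] with t ht
    simp only [gauss]
    gcongr
    nlinarith

lemma gaussTail_pos (x : ℝ) : 0 < gaussTail x := by
  rw [gaussTail, setIntegral_pos_iff_support_of_nonneg_ae
    (ae_of_all _ fun t => (gauss_pos t).le) integrable_gauss.integrableOn]
  simp [Function.support, (gauss_pos _).ne', Real.volume_Ioi]

lemma hasDerivAt_gaussTail (x : ℝ) : HasDerivAt gaussTail (-gauss x) x := by
  have hc : Continuous gauss := by unfold gauss; fun_prop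
  have hF : HasDerivAt (fun y => ∫ t in (0:ℝ)..y, gauss t) (gauss x) x :=
    intervalIntegral.integral_hasDerivAt_right (hc.intervalIntegrable _ _)
      (hc.stronglyMeasurableAtFilter _ _) hc.continuousAt
  refine (hF.const_sub (gaussTail 0)).congr_of_eventuallyEq (Eventually.of_forall fun y => ?_)
  rw [eq_sub_iff_add_eq', gaussTail, gaussTail,
    intervalIntegral.integral_interval_add_Ioi integrable_gauss.integrableOn
      integrable_gauss.integrableOn]

lemma tendsto_gaussTail_atTop : Tendsto gaussTail atTop (𝓝 0) :=
  tendsto_integral_Ioi_zero tendsto_id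

lemma integral_Ioi_affine_mul_gauss (c s α : ℝ) :
    ∫ t in Ioi α, (c + s * t) * gauss t = c * gaussTail α + s * gauss α := by
  have hF : ∀ t ∈ Ici α, HasDerivAt (fun t => -(c * gaussTail t + s * gauss t))
      ((c + s * t) * gauss t) t := fun t _ =>
    (((hasDerivAt_gaussTail t).const_mul c).add ((hasDerivAt_gauss t).const_mul s)).neg.congr_deriv
      (by ring)
  have hint : Integrable fun t => (c + s * t) * gauss t :=
    ((integrable_gauss.const_mul c).add (integrable_mul_gauss.const_mul s)).congr
      (ae_of_all _ fun t => by simp only [Pi.add_apply]; ring)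
  have hlim : Tendsto (fun t => -(c * gaussTail t + s * gauss t)) atTop (𝓝 0) := by
    simpa using ((tendsto_gaussTail_atTop.const_mul c).add (tendsto_gauss_atTop.const_mul s)).neg
  rw [integral_Ioi_of_hasDerivAt_of_tendsto' hF hint.integrableOn hlim]
  ring

lemma integral_Ioi_affine_sq_mul_gauss (c s α : ℝ) :
    ∫ t in Ioi α, (c + s * t) ^ 2 * gauss t
      = (c ^ 2 + s ^ 2) * gaussTail α + (2 * c * s + s ^ 2 * α) * gauss α := by
  have hF : ∀ t ∈ Ici α, HasDerivAt
      (fun t => -((c ^ 2 + s ^ 2) * gaussTail t + (2 * c * s + s ^ 2 * t) * gauss t))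
      ((c + s * t) ^ 2 * gauss t) t := fun t _ => by
    have hlin : HasDerivAt (fun t => 2 * c * s + s ^ 2 * t) (s ^ 2) t := by
      simpa using (hasDerivAt_id t).const_mul (s ^ 2) |>.const_add (2 * c * s)
    exact (((hasDerivAt_gaussTail t).const_mul (c ^ 2 + s ^ 2)).add
      (hlin.mul (hasDerivAt_gauss t))).neg.congr_deriv (by ring)
  have hlim : Tendsto
      (fun t => -((c ^ 2 + s ^ 2) * gaussTail t + (2 * c * s + s ^ 2 * t) * gauss t))
      atTop (𝓝 0) := by
    have h := ((tendsto_gaussTail_atTop.const_mul (c ^ 2 + s ^ 2)).add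
      ((tendsto_gauss_atTop.const_mul (2 * c * s)).add
        (tendsto_mul_gauss_atTop.const_mul (s ^ 2)))).neg
    simp only [mul_zero, add_zero, neg_zero] at h
    exact h.congr fun t => by ring
  rw [integral_Ioi_of_hasDerivAt_of_nonneg' hF (fun t _ => by have := gauss_pos t; positivity) hlim]
  ring

lemma setIntegral_Ici_comp_standardize (f : ℝ → ℝ) (a μ : ℝ) {σ : ℝ} (hσ : 0 < σ) :
    ∫ x in Ici a, f ((x - μ) / σ) = σ * ∫ t in Ioi ((a - μ) / σ), f t := by
  have hshift : ∫ y in Ioi (σ⁻¹ * a), f (y - μ / σ) = ∫ t in Ioi ((a - μ) / σ), f t := by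
    have h := (measurePreserving_sub_right volume (μ / σ)).setIntegral_preimage_emb
      (MeasurableEquiv.subRight (μ / σ)).measurableEmbedding f (Ioi ((a - μ) / σ))
    have hpre : (· - μ / σ) ⁻¹' Ioi ((a - μ) / σ) = Ioi (σ⁻¹ * a) := by
      ext y; simp [sub_div, inv_mul_eq_div]
    rwa [hpre] at h
  have hscale := integral_comp_mul_left_Ioi (fun y => f (y - μ / σ)) a (inv_pos.2 hσ)
  rw [inv_inv, smul_eq_mul, hshift] at hscale
  rw [integral_Ici_eq_integral_Ioi, ← hscale]
  congr 1 with x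
  congr 1
  field_simp

section TruncatedGaussian

variable {a μ σ : ℝ}

lemma exp_neg_sq_div_eq_gauss (hσ : σ ≠ 0) (x : ℝ) :
    exp (-(x - μ) ^ 2 / (2 * σ ^ 2)) = gauss ((x - μ) / σ) := by
  rw [gauss]; congr 1; field_simp

lemma lZ_eq (hσ : 0 < σ) : lZ a μ σ = σ * gaussTail ((a - μ) / σ) := by
  simp only [lZ, exp_neg_sq_div_eq_gauss hσ.ne']
  exact setIntegral_Ici_comp_standardize gauss a μ hσ

lemma lMean_eq (hσ : 0 < σ) : lMean a μ σ = μ + σ * invMillsRatio ((a - μ) / σ) := by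
  have hstd : ∫ x in Ici a, x * exp (-(x - μ) ^ 2 / (2 * σ ^ 2))
      = ∫ x in Ici a, (μ + σ * ((x - μ) / σ)) * gauss ((x - μ) / σ) := by
    congr 1 with x
    rw [exp_neg_sq_div_eq_gauss hσ.ne']
    field_simp
    ring
  have := gaussTail_pos ((a - μ) / σ)
  rw [lMean, hstd, setIntegral_Ici_comp_standardize (fun t => (μ + σ * t) * gauss t) a μ hσ,
    integral_Ioi_affine_mul_gauss, lZ_eq hσ, invMillsRatio]
  field_simp

lemma lVar_eq (hσ : 0 < σ) :
    lVar a μ σ = σ ^ 2 * (1 + (a - μ) / σ * invMillsRatio ((a - μ) / σ)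
      - invMillsRatio ((a - μ) / σ) ^ 2) := by
  set α := (a - μ) / σ with hα
  have hstd : ∫ x in Ici a, (x - lMean a μ σ) ^ 2 * exp (-(x - μ) ^ 2 / (2 * σ ^ 2))
      = ∫ x in Ici a, (-σ * invMillsRatio α + σ * ((x - μ) / σ)) ^ 2 * gauss ((x - μ) / σ) := by
    congr 1 with x
    rw [exp_neg_sq_div_eq_gauss hσ.ne', lMean_eq hσ]
    field_simp
    ring
  have := gaussTail_pos α
  rw [lVar, hstd, setIntegral_Ici_comp_standardize
      (fun t => (-σ * invMillsRatio α + σ * t) ^ 2 * gauss t) a μ hσ,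
    integral_Ioi_affine_sq_mul_gauss, lZ_eq hσ, ← hα, invMillsRatio]
  field_simp
  ring

lemma lMean_sub_eq (hσ : 0 < σ) :
    lMean a μ σ - a = σ * (invMillsRatio ((a - μ) / σ) - (a - μ) / σ) := by
  rw [lMean_eq hσ]
  field_simp
  ring

end TruncatedGaussian

section MillsRatioComparison

lemma neg_of_hasDerivAt_pos_of_tendsto_zero {b : ℝ} {G G' : ℝ → ℝ}
    (hd : ∀ x ∈ Ioi b, HasDerivAt G (G' x) x) (hpos : ∀ x ∈ Ioi b, 0 < G' x)
    (hlim : Tendsto G atTop (𝓝 0)) {x : ℝ} (hx : b < x) : G x < 0 := by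
  have hmono : StrictMonoOn G (Ioi b) := by
    refine strictMonoOn_of_deriv_pos (convex_Ioi b)
      (fun y hy => (hd y hy).continuousAt.continuousWithinAt) fun y hy => ?_
    rw [interior_Ioi] at hy
    rw [(hd y hy).deriv]
    exact hpos y hy
  have hx1 : x + 1 ∈ Ioi b := mem_Ioi.2 (by linarith)
  have hle : G (x + 1) ≤ 0 :=
    ge_of_tendsto hlim <| (eventually_gt_atTop (x + 1)).mono fun y hy =>
      (hmono hx1 (mem_Ioi.2 (by linarith [mem_Ioi.1 hx1])) hy).le
  exact (hmono hx hx1 (by linarith)).trans_le hle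

variable {b : ℝ} {h h' : ℝ → ℝ}

lemma gaussTail_lt_mul_gauss (hd : ∀ x ∈ Ioi b, HasDerivAt h (h' x) x)
    (hsuper : ∀ x ∈ Ioi b, h' x < x * h x - 1) (hlim : Tendsto h atTop (𝓝 0))
    {x : ℝ} (hx : b < x) : gaussTail x < h x * gauss x := by
  have := neg_of_hasDerivAt_pos_of_tendsto_zero (G := fun y => gaussTail y - h y * gauss y)
    (fun y hy => ((hasDerivAt_gaussTail y).sub ((hd y hy).mul (hasDerivAt_gauss y))).congr_deriv
      (show _ = gauss y * (y * h y - 1 - h' y) by ring))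
    (fun y hy => mul_pos (gauss_pos y) (by linarith [hsuper y hy]))
    (by simpa using tendsto_gaussTail_atTop.sub (hlim.mul tendsto_gauss_atTop)) hx
  linarith

lemma mul_gauss_lt_gaussTail (hd : ∀ x ∈ Ioi b, HasDerivAt h (h' x) x)
    (hsub : ∀ x ∈ Ioi b, x * h x - 1 < h' x) (hlim : Tendsto h atTop (𝓝 0))
    {x : ℝ} (hx : b < x) : h x * gauss x < gaussTail x := by
  have := neg_of_hasDerivAt_pos_of_tendsto_zero (G := fun y => h y * gauss y - gaussTail y)
    (fun y hy => (((hd y hy).mul (hasDerivAt_gauss y)).sub (hasDerivAt_gaussTail y)).congr_deriv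
      (show _ = gauss y * (h' y - (y * h y - 1)) by ring))
    (fun y hy => mul_pos (gauss_pos y) (by linarith [hsub y hy]))
    (by simpa using (hlim.mul tendsto_gauss_atTop).sub tendsto_gaussTail_atTop) hx
  linarith

end MillsRatioComparison

section Sampford

variable {y : ℝ}

lemma three_mul_add_sqrt_pos (hy : -1 < y) : 0 < 3 * y + √(y ^ 2 + 8) := by
  nlinarith [Real.sqrt_nonneg (y ^ 2 + 8), Real.sq_sqrt (by positivity : (0:ℝ) ≤ y ^ 2 + 8)]

lemma hasDerivAt_sampford (hy : -1 < y) :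
    HasDerivAt (fun y => 4 / (3 * y + √(y ^ 2 + 8)))
      (-4 * (3 * √(y ^ 2 + 8) + y) / (√(y ^ 2 + 8) * (3 * y + √(y ^ 2 + 8)) ^ 2)) y := by
  have hsq : HasDerivAt (fun y : ℝ => √(y ^ 2 + 8)) (2 * y / (2 * √(y ^ 2 + 8))) y := by
    simpa using ((hasDerivAt_pow 2 y).add_const 8).sqrt (by positivity)
  have hden : HasDerivAt (fun y => 3 * y + √(y ^ 2 + 8)) (3 + 2 * y / (2 * √(y ^ 2 + 8))) y :=
    (((hasDerivAt_id y).const_mul 3).add hsq).congr_deriv (by ring)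
  have hd := three_mul_add_sqrt_pos hy
  refine ((hasDerivAt_const y 4).div hden hd.ne').congr_deriv ?_
  have : √(y ^ 2 + 8) ≠ 0 := (Real.sqrt_pos.2 (by positivity)).ne'
  field_simp
  ring

lemma sampford_supersolution (hy : -1 < y) :
    -4 * (3 * √(y ^ 2 + 8) + y) / (√(y ^ 2 + 8) * (3 * y + √(y ^ 2 + 8)) ^ 2)
      < y * (4 / (3 * y + √(y ^ 2 + 8))) - 1 := by
  have hu0 : 0 < √(y ^ 2 + 8) := Real.sqrt_pos.2 (by positivity)
  have hu := Real.sq_sqrt (by positivity : (0:ℝ) ≤ y ^ 2 + 8)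
  have hd := three_mul_add_sqrt_pos hy
  generalize √(y ^ 2 + 8) = u at hu hu0 hd ⊢
  have key : y * (y ^ 2 + 6) < u * (y ^ 2 + 2) := by
    have hdiff : (u * (y ^ 2 + 2)) ^ 2 - (y * (y ^ 2 + 6)) ^ 2 = 32 := by
      linear_combination (y ^ 2 + 2) ^ 2 * hu
    nlinarith [mul_pos hu0 (by positivity : (0:ℝ) < y ^ 2 + 2)]
  have hgap : y * (4 / (3 * y + u)) - 1 - -4 * (3 * u + y) / (u * (3 * y + u) ^ 2)
      = 2 * (u * (y ^ 2 + 2) - y * (y ^ 2 + 6)) / (u * (3 * y + u) ^ 2) := by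
    have : y * 3 + u ≠ 0 := (by linarith : 0 < y * 3 + u).ne'
    field_simp
    linear_combination (-(u + 2 * y)) * hu
  rw [← sub_pos, hgap]
  exact div_pos (by linarith) (by positivity)

lemma sampford_lt_invMillsRatio (x : ℝ) : (3 * x + √(x ^ 2 + 8)) / 4 < invMillsRatio x := by
  have hpos : 0 < invMillsRatio x := div_pos (gauss_pos x) (gaussTail_pos x)
  rcases le_or_gt x (-1) with hx | hx
  · have : √(x ^ 2 + 8) ≤ -3 * x := Real.sqrt_le_iff.2 ⟨by linarith, by nlinarith⟩
    linarith
  have hlim : Tendsto (fun y => 4 / (3 * y + √(y ^ 2 + 8))) atTop (𝓝 0) :=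
    tendsto_const_nhds.div_atTop <| tendsto_atTop_mono
      (fun y => le_add_of_nonneg_right (Real.sqrt_nonneg _))
      (tendsto_id.const_mul_atTop three_pos)
  have hQ := gaussTail_lt_mul_gauss (fun y hy => hasDerivAt_sampford (mem_Ioi.1 hy))
    (fun y hy => sampford_supersolution (mem_Ioi.1 hy)) hlim hx
  rw [div_mul_eq_mul_div, lt_div_iff₀ (three_mul_add_sqrt_pos hx)] at hQ
  rw [invMillsRatio, div_lt_div_iff₀ four_pos (gaussTail_pos x)]
  linarith

end Sampford

lemma lt_invMillsRatio (x : ℝ) : x < invMillsRatio x := by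
  have := sampford_lt_invMillsRatio x
  nlinarith [Real.sqrt_nonneg (x ^ 2 + 8), Real.sq_sqrt (by positivity : (0:ℝ) ≤ x ^ 2 + 8)]

/- `(y³ + 5y)/(y⁴ + 6y² + 3) = 1/(y + 1/(y + 2/(y + 3/y)))` is a convergent of Laplace's
continued fraction for the Mills ratio. -/
lemma hasDerivAt_laplace (y : ℝ) :
    HasDerivAt (fun y => (y ^ 3 + 5 * y) / (y ^ 4 + 6 * y ^ 2 + 3))
      (((3 * y ^ 2 + 5) * (y ^ 4 + 6 * y ^ 2 + 3) - (y ^ 3 + 5 * y) * (4 * y ^ 3 + 12 * y))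
        / (y ^ 4 + 6 * y ^ 2 + 3) ^ 2) y := by
  have hnum : HasDerivAt (fun y : ℝ => y ^ 3 + 5 * y) (3 * y ^ 2 + 5) y :=
    ((hasDerivAt_pow 3 y).add ((hasDerivAt_id y).const_mul 5)).congr_deriv (by norm_num)
  have hden : HasDerivAt (fun y : ℝ => y ^ 4 + 6 * y ^ 2 + 3) (4 * y ^ 3 + 12 * y) y :=
    (((hasDerivAt_pow 4 y).add ((hasDerivAt_pow 2 y).const_mul 6)).add_const 3).congr_deriv
      (by norm_num; ring)
  exact hnum.div hden (by positivity)

lemma laplace_subsolution (y : ℝ) :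
    y * ((y ^ 3 + 5 * y) / (y ^ 4 + 6 * y ^ 2 + 3)) - 1
      < ((3 * y ^ 2 + 5) * (y ^ 4 + 6 * y ^ 2 + 3) - (y ^ 3 + 5 * y) * (4 * y ^ 3 + 12 * y))
        / (y ^ 4 + 6 * y ^ 2 + 3) ^ 2 := by
  have hgap : ((3 * y ^ 2 + 5) * (y ^ 4 + 6 * y ^ 2 + 3) - (y ^ 3 + 5 * y) * (4 * y ^ 3 + 12 * y))
      / (y ^ 4 + 6 * y ^ 2 + 3) ^ 2 - (y * ((y ^ 3 + 5 * y) / (y ^ 4 + 6 * y ^ 2 + 3)) - 1)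
      = 24 / (y ^ 4 + 6 * y ^ 2 + 3) ^ 2 := by
    field_simp
    ring
  rw [← sub_pos, hgap]
  positivity

lemma tendsto_laplace_atTop :
    Tendsto (fun y : ℝ => (y ^ 3 + 5 * y) / (y ^ 4 + 6 * y ^ 2 + 3)) atTop (𝓝 0) := by
  refine tendsto_of_tendsto_of_tendsto_of_le_of_le' tendsto_const_nhds tendsto_inv_atTop_zero
    ?_ ?_ <;> filter_upwards [eventually_gt_atTop 0] with y hy
  · positivity
  · rw [div_le_iff₀ (by positivity)]
    field_simp
    nlinarith

lemma invMillsRatio_lt_laplace {x : ℝ} (hx : 0 < x) :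
    invMillsRatio x < x + (x ^ 2 + 3) / (x ^ 3 + 5 * x) := by
  have hQ := mul_gauss_lt_gaussTail (fun y _ => hasDerivAt_laplace y)
    (fun y _ => laplace_subsolution y) tendsto_laplace_atTop hx
  have hD : 0 < x ^ 4 + 6 * x ^ 2 + 3 := by positivity
  have hp : 0 < x ^ 3 + 5 * x := by positivity
  rw [div_mul_eq_mul_div, div_lt_iff₀ hD] at hQ
  have hbound : (x + (x ^ 2 + 3) / (x ^ 3 + 5 * x)) * (x ^ 3 + 5 * x) = x ^ 4 + 6 * x ^ 2 + 3 := by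
    field_simp
    ring
  rw [invMillsRatio, div_lt_iff₀ (gaussTail_pos x)]
  nlinarith [gaussTail_pos x]

noncomputable def varRatio (x : ℝ) : ℝ :=
  (1 + x * invMillsRatio x - invMillsRatio x ^ 2) / (invMillsRatio x - x) ^ 2

lemma varRatio_lt_one (x : ℝ) : varRatio x < 1 := by
  have hs := sampford_lt_invMillsRatio x
  have hx := lt_invMillsRatio x
  have hu0 := Real.sqrt_nonneg (x ^ 2 + 8)
  have hu := Real.sq_sqrt (by positivity : (0:ℝ) ≤ x ^ 2 + 8)
  rw [varRatio, div_lt_one (by nlinarith)]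
  -- the quadratic `2λ² - 3xλ + x² - 1` has roots `(3x ± √(x² + 8)) / 4`
  nlinarith [mul_pos (by linarith : 0 < invMillsRatio x - (3 * x + √(x ^ 2 + 8)) / 4)
    (by linarith : 0 < invMillsRatio x - (3 * x - √(x ^ 2 + 8)) / 4)]

lemma one_sub_six_div_sq_le_varRatio {x : ℝ} (hx : 0 < x) : 1 - 6 / x ^ 2 ≤ varRatio x := by
  have hd : 0 < invMillsRatio x - x := sub_pos.2 (lt_invMillsRatio x)
  set s := (x ^ 3 + 5 * x) / (x ^ 2 + 3) with hs
  have hsr : s < (invMillsRatio x - x)⁻¹ := by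
    rw [← one_div, lt_one_div (by positivity) hd, div_div_eq_mul_div, one_mul]
    linarith [invMillsRatio_lt_laplace hx]
  have hxs : x ≤ s := by rw [le_div_iff₀ (by positivity)]; nlinarith
  have hvar : varRatio x = (invMillsRatio x - x)⁻¹ * ((invMillsRatio x - x)⁻¹ - x) - 1 := by
    rw [varRatio]
    field_simp
    ring
  have hgap : s * (s - x) - 1 - (1 - 6 / x ^ 2)
      = (4 * x ^ 4 + 18 * x ^ 2 + 54) / (x ^ 2 * (x ^ 2 + 3) ^ 2) := by
    rw [hs]
    field_simp
    ring
  have : 0 ≤ s * (s - x) - 1 - (1 - 6 / x ^ 2) := by rw [hgap]; positivity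
  rw [hvar]
  nlinarith [mul_le_mul hsr.le (by linarith : s - x ≤ (invMillsRatio x - x)⁻¹ - x)
    (by linarith) (by linarith)]

lemma tendsto_varRatio_atTop : Tendsto varRatio atTop (𝓝 1) := by
  have hlo : Tendsto (fun x : ℝ => 1 - 6 / x ^ 2) atTop (𝓝 1) := by
    simpa using tendsto_const_nhds.sub
      (tendsto_const_nhds.div_atTop (tendsto_pow_atTop two_ne_zero) :
        Tendsto (fun x : ℝ => 6 / x ^ 2) atTop (𝓝 0))
  refine tendsto_of_tendsto_of_tendsto_of_le_of_le' hlo tendsto_const_nhds ?_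
    (Eventually.of_forall fun x => (varRatio_lt_one x).le)
  filter_upwards [eventually_gt_atTop 0] with x hx
  exact one_sub_six_div_sq_le_varRatio hx

lemma lVar_eq_mul_varRatio {a μ σ : ℝ} (hσ : 0 < σ) :
    lVar a μ σ = (lMean a μ σ - a) ^ 2 * varRatio ((a - μ) / σ) := by
  have hgap := sub_ne_zero.2 (lt_invMillsRatio ((a - μ) / σ)).ne'
  rw [lVar_eq hσ, lMean_sub_eq hσ, varRatio]
  generalize invMillsRatio ((a - μ) / σ) = l at hgap ⊢
  generalize (a - μ) / σ = α at hgap ⊢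
  field_simp

lemma exists_lMean_eq {a M : ℝ} (hM : a < M) (x : ℝ) :
    ∃ μ σ, 0 < σ ∧ (a - μ) / σ = x ∧ lMean a μ σ = M := by
  have hgap := sub_pos.2 (lt_invMillsRatio x)
  set σ := (M - a) / (invMillsRatio x - x)
  have hσ : 0 < σ := div_pos (sub_pos.2 hM) hgap
  have hx : (a - (a - σ * x)) / σ = x := by field_simp; ring
  refine ⟨a - σ * x, σ, hσ, hx, ?_⟩
  have hmean := lMean_sub_eq (a := a) (μ := a - σ * x) hσ
  rw [hx, div_mul_cancel₀ _ hgap.ne'] at hmean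
  linarith

/-- for fixed `a` and `M > a`, the supremum of the variance of left-truncated
Gaussians on `[a, ∞)` with mean `M`, over all parameter pairs `(μ, σ)` with `σ > 0`,
equals `(M − a)²`, and this supremum is not attained. -/
theorem isLUB_lVar_not_attained (a M : ℝ) (hM : a < M) :
    IsLUB {v : ℝ | ∃ μ σ : ℝ, 0 < σ ∧ lMean a μ σ = M ∧ v = lVar a μ σ} ((M - a) ^ 2) ∧
      (M - a) ^ 2 ∉ {v : ℝ | ∃ μ σ : ℝ, 0 < σ ∧ lMean a μ σ = M ∧ v = lVar a μ σ} := by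
  set S := {v : ℝ | ∃ μ σ : ℝ, 0 < σ ∧ lMean a μ σ = M ∧ v = lVar a μ σ}
  have hlt : ∀ v ∈ S, v < (M - a) ^ 2 := by
    rintro v ⟨μ, σ, hσ, rfl, rfl⟩
    rw [lVar_eq_mul_varRatio hσ]
    exact mul_lt_of_lt_one_right (pow_pos (sub_pos.2 hM) 2) (varRatio_lt_one _)
  have hmem : ∀ x, (M - a) ^ 2 * varRatio x ∈ S := fun x => by
    obtain ⟨μ, σ, hσ, hx, hmean⟩ := exists_lMean_eq hM x
    exact ⟨μ, σ, hσ, hmean, by rw [lVar_eq_mul_varRatio hσ, hmean, hx]⟩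
  refine ⟨⟨fun v hv => (hlt v hv).le, fun b hb => ?_⟩, fun h => (hlt _ h).false⟩
  exact le_of_tendsto (by simpa using tendsto_varRatio_atTop.const_mul ((M - a) ^ 2))
    (Eventually.of_forall fun x => hb (hmem x))
end

section
/- Fix a ∈ ℝ and M > a. The function Var(M,r) = (M − a)²·(π·e^{r²}·ξ(r)² − √(2π)·r·e^{r²/2}·ξ(r) − 2) / (π·(r·e^{r²/2}·ξ(r) + √(2/π))²), where ξ(r) = erf(r/√2) + 1, satisfies lim_{r → +∞} Var(M,r) = 0; more precisely, Var(M,r) is asymptotically equivalent to ((M − a)/r)² as r → +∞. -/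
open MeasureTheory Real Filter Set

/-- The spread parameter `σ(M,r)` for which the left-truncated Gaussian on `[a, ∞)`
with `μ = r·σ + a` has mean `M`. -/
noncomputable def sigmaMr (a M r : ℝ) : ℝ :=
  (M - a) * Real.exp (r ^ 2 / 2) * xi r /
    (r * Real.exp (r ^ 2 / 2) * xi r + Real.sqrt (2 / Real.pi))

/-- Form II of the variance of a left-truncated Gaussian on `[a, ∞)` with mean `M` and
normalized location parameter `r`. -/
noncomputable def varII (a M r : ℝ) : ℝ :=
  (M - a) ^ 2 *
      (Real.pi * Real.exp (r ^ 2) * xi r ^ 2 -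
        Real.sqrt (2 * Real.pi) * r * Real.exp (r ^ 2 / 2) * xi r - 2) /
    (Real.pi * (r * Real.exp (r ^ 2 / 2) * xi r + Real.sqrt (2 / Real.pi)) ^ 2)

/-!
Put `u = e^{r²/2} ξ(r)` and `c = √(2/π)`. Since `√(2π) = π c` and `π c² = 2`, the variance is
`(M - a)² (u² - c r u - c²) / (r u + c)²`. As `ξ(r) → 2`, `u` grows like `e^{r²/2}`, so
`r / u → 0`, and dividing numerator and denominator by `r² u²` shows that this is
`((M - a) / r)² (1 + o(1))`.
-/

open Asymptotics Topology

lemma tendsto_erf_atTop : Tendsto erf atTop (𝓝 1) := by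
  have hint : IntegrableOn (fun t : ℝ => exp (-t ^ 2)) (Ioi 0) := by
    simpa using (integrable_exp_neg_mul_sq (b := 1) one_pos).integrableOn
  have hlim := (intervalIntegral_tendsto_integral_Ioi 0 hint tendsto_id).const_mul
    (2 / √π)
  have hval : 2 / √π * ∫ t in Ioi (0 : ℝ), exp (-t ^ 2) = 1 := by
    have : (∫ t in Ioi (0 : ℝ), exp (-t ^ 2)) = √π / 2 := by
      simpa using integral_gaussian_Ioi 1
    rw [this]
    field_simp
  rwa [hval] at hlim

lemma tendsto_xi_atTop : Tendsto xi atTop (𝓝 2) := by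
  have := (tendsto_erf_atTop.comp
    (tendsto_id.atTop_div_const (r := √2) (by positivity))).add_const 1
  norm_num at this
  exact this

lemma tendsto_div_exp_sq_half_atTop :
    Tendsto (fun r : ℝ => r / exp (r ^ 2 / 2)) atTop (𝓝 0) := by
  refine ((tendsto_rpow_abs_mul_exp_neg_mul_sq_cocompact one_half_pos 1).mono_left
    atTop_le_cocompact).congr' ?_
  filter_upwards [eventually_ge_atTop 0] with r hr
  rw [abs_of_nonneg hr, rpow_one, div_eq_mul_inv r, ← exp_neg]
  ring_nf

lemma tendsto_div_exp_sq_half_mul_xi_atTop :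
    Tendsto (fun r : ℝ => r / (exp (r ^ 2 / 2) * xi r)) atTop (𝓝 0) := by
  simpa only [Pi.div_def, zero_div, div_div] using
    tendsto_div_exp_sq_half_atTop.div tendsto_xi_atTop two_ne_zero

lemma varII_eq (a M r : ℝ) :
    varII a M r = (M - a) ^ 2 *
      (((exp (r ^ 2 / 2) * xi r) ^ 2 - √(2 / π) * r * (exp (r ^ 2 / 2) * xi r) -
          √(2 / π) ^ 2) / (r * (exp (r ^ 2 / 2) * xi r) + √(2 / π)) ^ 2) := by
  have hsqrt : √(2 * π) = π * √(2 / π) := by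
    rw [show 2 * π = π ^ 2 * (2 / π) by field_simp, sqrt_mul (sq_nonneg _), sqrt_sq pi_pos.le]
  have hsq : π * √(2 / π) ^ 2 = 2 := by
    rw [sq_sqrt (by positivity)]
    field_simp
  have hexp : exp (r ^ 2) = exp (r ^ 2 / 2) ^ 2 := by rw [← exp_nat_mul]; ring_nf
  rw [varII, mul_div_assoc, ← mul_div_mul_left (_ - _ - _) (_ ^ 2) pi_ne_zero]
  congr 2
  · rw [hsqrt, hexp]
    linear_combination hsq
  · ring

lemma isEquivalent_inv_sq_of_tendsto_div (c : ℝ) {u : ℝ → ℝ}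
    (hu : Tendsto (fun r => r / u r) atTop (𝓝 0)) (hu0 : ∀ᶠ r in atTop, u r ≠ 0) :
    (fun r => (u r ^ 2 - c * r * u r - c ^ 2) / (r * u r + c) ^ 2) ~[atTop]
      fun r => (r ^ 2)⁻¹ := by
  refine isEquivalent_of_tendsto_one ?_
  -- with `w = r / u`, the ratio is `(1 - c w - c² (w / r)²) / (1 + c w / r²)²`
  have hw₁ := hu.div_atTop tendsto_id
  have hw₂ := hu.div_atTop (tendsto_pow_atTop two_ne_zero)
  have hlim := ((tendsto_const_nhds (x := (1 : ℝ)).sub (hu.const_mul c)).sub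
    ((hw₁.pow 2).const_mul (c ^ 2))).div
      ((tendsto_const_nhds (x := (1 : ℝ)).add (hw₂.const_mul c)).pow 2) (by norm_num)
  norm_num at hlim
  refine hlim.congr' ?_
  filter_upwards [hu0, eventually_gt_atTop 0] with r hur hr
  simp only [Pi.div_apply]
  field_simp

lemma isEquivalent_varII (a M : ℝ) :
    (fun r => varII a M r) ~[atTop] fun r => ((M - a) / r) ^ 2 := by
  have hu0 : ∀ᶠ r in atTop, exp (r ^ 2 / 2) * xi r ≠ 0 := by
    filter_upwards [tendsto_xi_atTop.eventually_ne two_ne_zero] with r hr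
    positivity
  have := (IsEquivalent.refl (u := fun _ : ℝ => (M - a) ^ 2)).mul
    (isEquivalent_inv_sq_of_tendsto_div √(2 / π) tendsto_div_exp_sq_half_mul_xi_atTop hu0)
  convert this using 1
  · exact funext fun r => varII_eq a M r
  · ext r
    simp only [Pi.mul_apply, div_eq_mul_inv]
    ring

open Asymptotics in
theorem tendsto_varII_atTop_general (a M : ℝ) :
    Filter.Tendsto (fun r : ℝ => varII a M r) Filter.atTop (nhds 0) ∧
      (fun r : ℝ => varII a M r) ~[Filter.atTop] (fun r : ℝ => ((M - a) / r) ^ 2) := by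
  have hsq : Tendsto (fun r : ℝ => ((M - a) / r) ^ 2) atTop (𝓝 0) := by
    simpa using ((tendsto_const_nhds (x := M - a)).div_atTop tendsto_id).pow 2
  exact ⟨(isEquivalent_varII a M).symm.tendsto_nhds hsq, isEquivalent_varII a M⟩

open Asymptotics in
/-- `Var(M,r) → 0` as `r → +∞`; more precisely `Var(M,r) ~ ((M − a)/r)²`
as `r → +∞`. -/
theorem tendsto_varII_atTop (a M : ℝ) (hM : a < M) :
    Filter.Tendsto (fun r : ℝ => varII a M r) Filter.atTop (nhds 0) ∧
      (fun r : ℝ => varII a M r) ~[Filter.atTop] (fun r : ℝ => ((M - a) / r) ^ 2) :=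
  tendsto_varII_atTop_general a M
end

section
/- Fix a ∈ ℝ and M > a, and let ξ(r) = erf(r/√2) + 1, σ(M,r) = (M − a)·e^{r²/2}·ξ(r) / (r·e^{r²/2}·ξ(r) + √(2/π)). Then for every r ∈ ℝ, the derivative of σ(M,·) at r equals −Var(M,r)/(M − a), where Var(M,r) = (M − a)²·(π·e^{r²}·ξ(r)² − √(2π)·r·e^{r²/2}·ξ(r) − 2) / (π·(r·e^{r²/2}·ξ(r) + √(2/π))²). -/
open MeasureTheory Real Filter Set

/-! With `g r = exp (r ^ 2 / 2) * ξ r`, the derivative `ξ' r = √(2/π) * exp (-r ^ 2 / 2)` gives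
`g' = r * g + √(2/π)`, so `σ(M, ·) = (M - a) * g / g'` and the quotient rule yields
`σ' = (M - a) * (√(2/π) * g' - g ^ 2) / g' ^ 2`, which is `-Var / (M - a)` because
`π * √(2/π) ^ 2 = 2`. The quotient rule applies because `g' > 0`: writing
`ξ r = √(2/π) * ∫_{-∞}^r exp (-s ^ 2 / 2)` and using
`∫_{-∞}^r s * exp (-s ^ 2 / 2) = -exp (-r ^ 2 / 2)`, one finds
`exp (-r ^ 2 / 2) * g' r = √(2/π) * ∫_{-∞}^r (r - s) * exp (-s ^ 2 / 2) > 0`. -/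

lemma xi_eq_one_add_integral (r : ℝ) :
    xi r = 1 + √(2 / π) * ∫ s in (0 : ℝ)..r, exp (-s ^ 2 / 2) := by
  have hsub : ∫ s in (0 : ℝ)..r, exp (-s ^ 2 / 2) =
      √2 * ∫ t in (0 : ℝ)..r / √2, exp (-t ^ 2) := by
    have h := intervalIntegral.integral_comp_div (fun t => exp (-t ^ 2)) (a := 0) (b := r)
      (Real.sqrt_ne_zero'.mpr two_pos)
    simp only [div_pow, Real.sq_sqrt zero_le_two, zero_div, smul_eq_mul] at h
    simpa only [neg_div] using h
  rw [xi, erf, hsub, Real.sqrt_div zero_le_two]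
  field_simp
  rw [Real.sq_sqrt zero_le_two]
  ring

lemma hasDerivAt_xi (r : ℝ) : HasDerivAt xi (√(2 / π) * exp (-r ^ 2 / 2)) r := by
  have hcont : Continuous fun s : ℝ => exp (-s ^ 2 / 2) := by fun_prop
  have hint := intervalIntegral.integral_hasDerivAt_right (hcont.intervalIntegrable 0 r)
    (hcont.stronglyMeasurableAtFilter _ _) hcont.continuousAt
  simpa only [funext xi_eq_one_add_integral] using (hint.const_mul √(2 / π)).const_add 1

lemma exp_sq_half_mul_exp_neg_sq_half (r : ℝ) : exp (r ^ 2 / 2) * exp (-r ^ 2 / 2) = 1 := by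
  rw [neg_div, exp_neg, mul_inv_cancel₀ (exp_pos _).ne']

lemma integrable_exp_neg_sq_half : Integrable fun s : ℝ => exp (-s ^ 2 / 2) := by
  simpa [neg_div, div_eq_inv_mul] using integrable_exp_neg_mul_sq (b := 1 / 2) (by norm_num)

lemma integrable_mul_exp_neg_sq_half : Integrable fun s : ℝ => s * exp (-s ^ 2 / 2) := by
  simpa [neg_div, div_eq_inv_mul] using integrable_mul_exp_neg_mul_sq (b := 1 / 2) (by norm_num)

lemma integral_Iic_zero_exp_neg_sq_half :
    ∫ s in Iic (0 : ℝ), exp (-s ^ 2 / 2) = √(2 * π) / 2 := by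
  have h := integral_comp_neg_Iic 0 fun s : ℝ => exp (-(1 / 2) * s ^ 2)
  rw [neg_zero, integral_gaussian_Ioi] at h
  simp only [neg_sq] at h
  convert h using 2
  · ext s
    ring_nf
  · rw [div_div_eq_mul_div, div_one, mul_comm]

lemma xi_eq_integral_Iic (r : ℝ) : xi r = √(2 / π) * ∫ s in Iic r, exp (-s ^ 2 / 2) := by
  have hsplit := intervalIntegral.integral_Iic_sub_Iic (a := 0) (b := r)
    integrable_exp_neg_sq_half.integrableOn integrable_exp_neg_sq_half.integrableOn
  have hc : √(2 / π) * √(2 * π) = 2 := by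
    rw [← Real.sqrt_mul (by positivity), show 2 / π * (2 * π) = 2 ^ 2 by field_simp,
      Real.sqrt_sq zero_le_two]
  rw [xi_eq_one_add_integral, ← hsplit, integral_Iic_zero_exp_neg_sq_half]
  linear_combination -hc / 2

lemma integral_Iic_mul_exp_neg_sq_half (r : ℝ) :
    ∫ s in Iic r, s * exp (-s ^ 2 / 2) = -exp (-r ^ 2 / 2) := by
  have hderiv (s : ℝ) :
      HasDerivAt (fun s => -exp (-s ^ 2 / 2)) (s * exp (-s ^ 2 / 2)) s := by
    refine ((hasDerivAt_pow 2 s).fun_neg.div_const 2).exp.fun_neg.congr_deriv ?_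
    push_cast
    ring
  have hlim : Tendsto (fun s : ℝ => -exp (-s ^ 2 / 2)) atBot (nhds 0) := by
    have hsq : Tendsto (fun s : ℝ => -s ^ 2 / 2) atBot atBot := by
      have := tendsto_neg_atTop_atBot.comp <|
        ((tendsto_pow_atTop two_ne_zero).comp tendsto_neg_atBot_atTop).atTop_div_const
          (two_pos : (0 : ℝ) < 2)
      simpa only [Function.comp_def, neg_sq, neg_div] using this
    simpa using (tendsto_exp_atBot.comp hsq).neg
  simpa using integral_Iic_of_hasDerivAt_of_tendsto' (fun s _ => hderiv s)
    integrable_mul_exp_neg_sq_half.integrableOn hlim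

lemma integral_Iic_sub_mul_exp_neg_sq_half_pos (r : ℝ) :
    0 < ∫ s in Iic r, (r - s) * exp (-s ^ 2 / 2) := by
  have hcont : Continuous fun s : ℝ => (r - s) * exp (-s ^ 2 / 2) := by fun_prop
  have hint : Integrable fun s : ℝ => (r - s) * exp (-s ^ 2 / 2) := by
    simpa only [sub_mul, Pi.sub_def] using
      (integrable_exp_neg_sq_half.const_mul r).sub integrable_mul_exp_neg_sq_half
  calc 0 < ∫ s in (r - 1)..r, (r - s) * exp (-s ^ 2 / 2) :=
        intervalIntegral.intervalIntegral_pos_of_pos_on (hcont.intervalIntegrable _ _)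
          (fun s hs => mul_pos (sub_pos.2 hs.2) (exp_pos _)) (by linarith)
    _ ≤ ∫ s in Iic r, (r - s) * exp (-s ^ 2 / 2) := by
      rw [intervalIntegral.integral_of_le (by linarith)]
      refine setIntegral_mono_set hint.integrableOn ?_ Ioc_subset_Iic_self.eventuallyLE
      filter_upwards [ae_restrict_mem measurableSet_Iic] with s hs
      exact mul_nonneg (sub_nonneg.2 hs) (exp_pos _).le

lemma mul_exp_mul_xi_add_pos (r : ℝ) : 0 < r * (exp (r ^ 2 / 2) * xi r) + √(2 / π) := by
  have key : r * (exp (r ^ 2 / 2) * xi r) + √(2 / π) =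
      √(2 / π) * exp (r ^ 2 / 2) * ∫ s in Iic r, (r - s) * exp (-s ^ 2 / 2) := by
    simp_rw [sub_mul]
    rw [integral_sub (integrable_exp_neg_sq_half.const_mul r).integrableOn
      integrable_mul_exp_neg_sq_half.integrableOn, integral_const_mul,
      integral_Iic_mul_exp_neg_sq_half, xi_eq_integral_Iic]
    linear_combination -√(2 / π) * exp_sq_half_mul_exp_neg_sq_half r
  rw [key]
  have := integral_Iic_sub_mul_exp_neg_sq_half_pos r
  positivity

lemma hasDerivAt_exp_mul_xi (r : ℝ) :
    HasDerivAt (fun r => exp (r ^ 2 / 2) * xi r)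
      (r * (exp (r ^ 2 / 2) * xi r) + √(2 / π)) r := by
  have hexp : HasDerivAt (fun r : ℝ => exp (r ^ 2 / 2)) (exp (r ^ 2 / 2) * r) r :=
    ((hasDerivAt_pow 2 r).div_const 2).exp.congr_deriv (by push_cast; ring)
  refine (hexp.mul (hasDerivAt_xi r)).congr_deriv ?_
  linear_combination √(2 / π) * exp_sq_half_mul_exp_neg_sq_half r

lemma hasDerivAt_const_mul_div_id_mul_add {g : ℝ → ℝ} {c r : ℝ} (m : ℝ)
    (hg : HasDerivAt g (r * g r + c) r) (hD : r * g r + c ≠ 0) :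
    HasDerivAt (fun r => m * g r / (r * g r + c))
      (m * (c * (r * g r + c) - g r ^ 2) / (r * g r + c) ^ 2) r := by
  have hD' : HasDerivAt (fun r => r * g r + c) (g r + r * (r * g r + c)) r := by
    simpa using ((hasDerivAt_id' r).mul hg).add_const c
  refine ((hg.const_mul m).div hD' hD).congr_deriv ?_
  ring

lemma neg_varII_div (a M r : ℝ) :
    -varII a M r / (M - a) =
      (M - a) * (√(2 / π) * (r * (exp (r ^ 2 / 2) * xi r) + √(2 / π)) -
          (exp (r ^ 2 / 2) * xi r) ^ 2) /
        (r * (exp (r ^ 2 / 2) * xi r) + √(2 / π)) ^ 2 := by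
  have hc : π * √(2 / π) ^ 2 = 2 := by
    rw [Real.sq_sqrt (by positivity)]
    field_simp
  have h2π : √(2 * π) = π * √(2 / π) := by
    rw [show 2 * π = π ^ 2 * (2 / π) by field_simp, Real.sqrt_mul (sq_nonneg _),
      Real.sqrt_sq pi_pos.le]
  have hexp : exp (r ^ 2) = exp (r ^ 2 / 2) ^ 2 := by rw [← exp_nat_mul]; ring_nf
  rcases eq_or_ne (M - a) 0 with hMa | hMa
  · simp [varII, hMa]
  rw [varII, h2π, hexp]
  field_simp
  rw [← neg_div]
  congr 1
  linear_combination -hc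

theorem hasDerivAt_sigmaMr_general (a M : ℝ) (r : ℝ) :
    HasDerivAt (fun r : ℝ => sigmaMr a M r) (-(varII a M r) / (M - a)) r := by
  have hσ : (fun r => sigmaMr a M r) = fun r =>
      (M - a) * (exp (r ^ 2 / 2) * xi r) / (r * (exp (r ^ 2 / 2) * xi r) + √(2 / π)) := by
    simp only [sigmaMr, mul_assoc]
  rw [hσ, neg_varII_div]
  exact hasDerivAt_const_mul_div_id_mul_add (M - a) (hasDerivAt_exp_mul_xi r)
    (mul_exp_mul_xi_add_pos r).ne'

/-- the derivative of `σ(M,·)` at `r` equals `−Var(M,r)/(M − a)`. -/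
theorem hasDerivAt_sigmaMr (a M : ℝ) (hM : a < M) (r : ℝ) :
    HasDerivAt (fun r : ℝ => sigmaMr a M r) (-(varII a M r) / (M - a)) r :=
  hasDerivAt_sigmaMr_general a M r
end

section
/- Fix a ∈ ℝ and M > a, and let Var(M,r) denote the variance of the left-truncated Gaussian on [a, ∞) with mean M and normalized location parameter r. If there exists r₀ ∈ ℝ at which the function r ↦ Var(M,r) attains a global maximum over ℝ, then Var(M,r₀) < (M − a)². -/
/-!
With `s = ξ/φ`, which solves `s' = r s + 2`, the ratio `Var(M,r)/(M - a)²` is the rational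
function `(s² - 2rs - 4)/(rs + 2)²`. At a critical point the first-order condition says that
`u = s²` and `t = rs + 2` satisfy `u² = 3tu + (t - 2)t²`. This quadratic in `u` takes the value
`t⁴ > 0` at `u = t² + 2t`, and `u ≥ 0` places `u` below that point, i.e. `s² - 2rs - 4 < t²`.
-/

open MeasureTheory Real Filter Set

/-- `ξ(r)/φ(r)`, with `φ` the standard normal density. -/
noncomputable def xiRatio (r : ℝ) : ℝ :=
  √(2 * π) * exp (r ^ 2 / 2) * xi r

lemma erf_hasDerivAt (x : ℝ) :
    HasDerivAt erf (2 / √π * exp (-x ^ 2)) x := by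
  have hcont : Continuous fun t : ℝ => exp (-t ^ 2) := by fun_prop
  exact ((intervalIntegral.integral_hasStrictDerivAt_right (hcont.intervalIntegrable _ _)
    (hcont.stronglyMeasurableAtFilter _ _) hcont.continuousAt).hasDerivAt).const_mul _

lemma xi_hasDerivAt (r : ℝ) :
    HasDerivAt xi (2 / √(2 * π) * exp (-(r ^ 2 / 2))) r := by
  have hr : HasDerivAt (fun y : ℝ => y / √2) (1 / √2) r := by
    simpa using (hasDerivAt_id r).div_const √2
  refine (((erf_hasDerivAt (r / √2)).comp r hr).add_const 1).congr_deriv ?_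
  rw [div_pow, sq_sqrt zero_le_two, sqrt_mul zero_le_two]
  field_simp

lemma xiRatio_hasDerivAt (r : ℝ) : HasDerivAt xiRatio (r * xiRatio r + 2) r := by
  have hexp : HasDerivAt (fun r : ℝ => exp (r ^ 2 / 2)) (exp (r ^ 2 / 2) * r) r := by
    simpa using ((hasDerivAt_pow 2 r).div_const 2).exp
  refine ((hexp.const_mul (√(2 * π))).mul (xi_hasDerivAt r)).congr_deriv ?_
  have he : exp (r ^ 2 / 2) * exp (-(r ^ 2 / 2)) = 1 := by
    rw [← exp_add, add_neg_cancel, exp_zero]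
  unfold xiRatio
  field_simp
  linear_combination 2 * he

lemma varII_eq_mul (a M r : ℝ) : varII a M r = (M - a) ^ 2 * varII 0 1 r := by
  simp only [varII, sub_zero, one_pow, one_mul]
  ring

lemma varII_zero_one :
    varII 0 1 = fun r => (xiRatio r ^ 2 - 2 * r * xiRatio r - 4) / (r * xiRatio r + 2) ^ 2 := by
  funext r
  have h2π : √(2 * π) ^ 2 = 2 * π := sq_sqrt (by positivity)
  have hc : π * √(2 / π) ^ 2 = 2 := by
    rw [sq_sqrt (by positivity)]
    field_simp
  have hs : √(2 * π) = π * √(2 / π) := by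
    rw [show 2 * π = 2 / π * π ^ 2 by field_simp,
      sqrt_mul (by positivity), sqrt_sq pi_pos.le, mul_comm]
  have hexp : exp (r ^ 2) = exp (r ^ 2 / 2) ^ 2 := by
    rw [← exp_nat_mul]; ring_nf
  simp only [varII, xiRatio, sub_zero, one_pow, one_mul]
  rw [← mul_div_mul_left _ _ (two_ne_zero' ℝ)]
  congr 1
  · linear_combination (-(exp (r ^ 2 / 2) ^ 2 * xi r ^ 2)) * h2π + 2 * π * xi r ^ 2 * hexp
  · linear_combination (-(r * exp (r ^ 2 / 2) * xi r) ^ 2) * h2π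
      - 4 * r * exp (r ^ 2 / 2) * xi r * hs + 2 * hc

lemma lt_sq_add_two_mul_of_sq_eq {u t : ℝ} (hu : 0 ≤ u) (ht : t ≠ 0)
    (h : u ^ 2 = 3 * t * u + (t - 2) * t ^ 2) : u < t ^ 2 + 2 * t := by
  by_contra! hge
  have hfactor : (u - (t ^ 2 + 2 * t)) * (u + t ^ 2 - t) = -t ^ 4 := by linear_combination h
  have hpos : 0 < u + t ^ 2 - t := by
    rcases ht.lt_or_gt with hneg | hpos <;> nlinarith
  have hprod : 0 ≤ (u - (t ^ 2 + 2 * t)) * (u + t ^ 2 - t) :=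
    mul_nonneg (sub_nonneg.mpr hge) hpos.le
  have ht4 : 0 < t ^ 4 := by positivity
  linarith

lemma sq_sq_eq_of_isLocalMax {g : ℝ → ℝ} {r : ℝ} (hg : HasDerivAt g (r * g r + 2) r)
    (ht : r * g r + 2 ≠ 0)
    (hmax : IsLocalMax (fun x => (g x ^ 2 - 2 * x * g x - 4) / (x * g x + 2) ^ 2) r) :
    (g r ^ 2) ^ 2 = 3 * (r * g r + 2) * g r ^ 2 + r * g r * (r * g r + 2) ^ 2 := by
  have hid := hasDerivAt_id r
  have hnum := ((hg.pow 2).sub ((hid.const_mul 2).mul hg)).sub_const 4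
  have hden := ((hid.mul hg).add_const 2).pow 2
  have hderiv := hmax.hasDerivAt_eq_zero (hnum.div hden (pow_ne_zero 2 ht))
  simp only [Pi.mul_apply, Pi.pow_apply, Pi.sub_apply, id_eq, div_eq_zero_iff, ht, ne_eq,
    OfNat.ofNat_ne_zero, not_false_eq_true, pow_eq_zero_iff, or_false] at hderiv
  refine mul_left_cancel₀ ht ?_
  linear_combination (-g r / 2) * hderiv

lemma lt_one_of_isLocalMax {g : ℝ → ℝ} {r : ℝ} (hg : HasDerivAt g (r * g r + 2) r)
    (hmax : IsLocalMax (fun x => (g x ^ 2 - 2 * x * g x - 4) / (x * g x + 2) ^ 2) r) :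
    (g r ^ 2 - 2 * r * g r - 4) / (r * g r + 2) ^ 2 < 1 := by
  by_cases ht : r * g r + 2 = 0
  · simp [ht]
  have hcrit := sq_sq_eq_of_isLocalMax hg ht hmax
  have hlt := lt_sq_add_two_mul_of_sq_eq (sq_nonneg (g r)) ht (by linear_combination hcrit)
  rw [div_lt_one (by positivity)]
  linarith

/-- if `r ↦ Var(M,r)` attains a global maximum over `ℝ` at some `r₀`, then
`Var(M,r₀) < (M − a)²`. -/
theorem varII_globalMax_lt (a M : ℝ) (hM : a < M) (r₀ : ℝ)
    (hmax : ∀ r : ℝ, varII a M r ≤ varII a M r₀) :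
    varII a M r₀ < (M - a) ^ 2 := by
  have hK : 0 < (M - a) ^ 2 := pow_pos (sub_pos.mpr hM) 2
  have hloc : IsLocalMax (varII 0 1) r₀ := Eventually.of_forall fun r => by
    have h := hmax r
    rw [varII_eq_mul a M r, varII_eq_mul a M r₀] at h
    exact le_of_mul_le_mul_left h hK
  rw [varII_zero_one] at hloc
  have hlt := lt_one_of_isLocalMax (xiRatio_hasDerivAt r₀) hloc
  calc varII a M r₀ = (M - a) ^ 2 * varII 0 1 r₀ := varII_eq_mul a M r₀
    _ < (M - a) ^ 2 * 1 := by rw [varII_zero_one]; exact mul_lt_mul_of_pos_left hlt hK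
    _ = (M - a) ^ 2 := mul_one _
end

section
/- For every a ∈ ℝ, μ ∈ ℝ and σ > 0, if the left-truncated Gaussian distribution on [a, ∞) with parameters μ, σ has mean M, then its variance equals σ² + (M − a)·(μ − a) − (M − a)². -/
open MeasureTheory Real Filter Set

/-! With `w(x) = exp(-(x-μ)²/(2σ²))` one has `σ² w' = -(x-μ) w`, so integrating by parts on
`[a, ∞)` gives the truncated moments about `μ` in terms of the boundary value `E = w(a)` and
`Z = ∫_a^∞ w`:  `∫ (x-μ) w = σ² E`  and  `∫ (x-μ)² w = σ² Z + σ² (a-μ) E`.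
The first says `(M - μ) Z = σ² E`; substituting it into the expansion of `∫ (x-M)² w` about `μ`
gives the variance. -/

open Topology

theorem integral_Ici_of_hasDerivAt_of_integrableOn {E : Type*} [NormedAddCommGroup E]
    [NormedSpace ℝ E] [CompleteSpace E] {f f' : ℝ → E} {a : ℝ}
    (hderiv : ∀ x ∈ Ici a, HasDerivAt f (f' x) x) (hf' : IntegrableOn f' (Ioi a))
    (hf : IntegrableOn f (Ioi a)) :
    ∫ x in Ici a, f' x = -f a := by
  have hlim : Tendsto f atTop (𝓝 0) :=
    tendsto_zero_of_hasDerivAt_of_integrableOn_Ioi (fun x hx ↦ hderiv x (mem_Ici_of_Ioi hx))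
      hf' hf
  rw [integral_Ici_eq_integral_Ioi, integral_Ioi_of_hasDerivAt_of_tendsto' hderiv hf' hlim,
    zero_sub]

noncomputable def gaussianWeight (μ σ x : ℝ) : ℝ := exp (-(x - μ) ^ 2 / (2 * σ ^ 2))

section GaussianWeight

variable {μ σ : ℝ}

theorem hasDerivAt_gaussianWeight (x : ℝ) :
    HasDerivAt (gaussianWeight μ σ) (-(x - μ) / σ ^ 2 * gaussianWeight μ σ x) x := by
  have h := ((((hasDerivAt_id x).sub_const μ).pow 2).neg.div_const (2 * σ ^ 2)).exp
  refine h.congr_deriv ?_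
  simp only [gaussianWeight, id_eq, Pi.pow_apply, Pi.neg_apply]
  ring

theorem hasDerivAt_sub_pow_mul_gaussianWeight (n : ℕ) (x : ℝ) :
    HasDerivAt (fun y ↦ (y - μ) ^ (n + 1) * gaussianWeight μ σ y)
      ((n + 1) * (x - μ) ^ n * gaussianWeight μ σ x
        - (x - μ) ^ (n + 2) / σ ^ 2 * gaussianWeight μ σ x) x := by
  have h := (((hasDerivAt_id x).sub_const μ).pow (n + 1)).mul
    (hasDerivAt_gaussianWeight (μ := μ) (σ := σ) x)
  refine h.congr_deriv ?_
  simp only [id_eq, Pi.pow_apply]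
  push_cast
  ring

theorem integrable_sub_pow_mul_gaussianWeight (hσ : σ ≠ 0) (n : ℕ) :
    Integrable (fun x ↦ (x - μ) ^ n * gaussianWeight μ σ x) := by
  have hb : 0 < (2 * σ ^ 2)⁻¹ := by positivity
  have h := (integrable_rpow_mul_exp_neg_mul_sq hb (s := n) (by linarith [n.cast_nonneg (α := ℝ)]))
    |>.comp_sub_right μ
  refine h.congr (ae_of_all _ fun x ↦ ?_)
  simp only [rpow_natCast, gaussianWeight]
  ring_nf

theorem integrable_gaussianWeight (hσ : σ ≠ 0) : Integrable (gaussianWeight μ σ) := by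
  simpa using integrable_sub_pow_mul_gaussianWeight (μ := μ) hσ 0

theorem integrable_sub_mul_gaussianWeight (hσ : σ ≠ 0) :
    Integrable (fun x ↦ (x - μ) * gaussianWeight μ σ x) := by
  simpa using integrable_sub_pow_mul_gaussianWeight (μ := μ) hσ 1

variable (a : ℝ)

theorem integral_Ici_sub_mul_gaussianWeight (hσ : σ ≠ 0) :
    ∫ x in Ici a, (x - μ) * gaussianWeight μ σ x = σ ^ 2 * gaussianWeight μ σ a := by
  have hderiv (x : ℝ) :
      HasDerivAt (fun y ↦ -σ ^ 2 * gaussianWeight μ σ y) ((x - μ) * gaussianWeight μ σ x) x :=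
    ((hasDerivAt_gaussianWeight x).const_mul _).congr_deriv (by field_simp)
  rw [integral_Ici_of_hasDerivAt_of_integrableOn (fun x _ ↦ hderiv x)
    (integrable_sub_mul_gaussianWeight hσ).integrableOn
    ((integrable_gaussianWeight hσ).const_mul _).integrableOn]
  ring

theorem integral_Ici_sub_pow_add_two_mul_gaussianWeight (hσ : σ ≠ 0) (n : ℕ) :
    ∫ x in Ici a, (x - μ) ^ (n + 2) * gaussianWeight μ σ x
      = σ ^ 2 * (a - μ) ^ (n + 1) * gaussianWeight μ σ a
        + σ ^ 2 * (n + 1) * ∫ x in Ici a, (x - μ) ^ n * gaussianWeight μ σ x := by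
  have hderiv (x : ℝ) :
      HasDerivAt (fun y ↦ -σ ^ 2 * ((y - μ) ^ (n + 1) * gaussianWeight μ σ y))
        ((x - μ) ^ (n + 2) * gaussianWeight μ σ x
          - σ ^ 2 * (n + 1) * ((x - μ) ^ n * gaussianWeight μ σ x)) x :=
    ((hasDerivAt_sub_pow_mul_gaussianWeight n x).const_mul _).congr_deriv (by field_simp; ring)
  have hint (k : ℕ) := integrable_sub_pow_mul_gaussianWeight (μ := μ) hσ k
  have hFTC := integral_Ici_of_hasDerivAt_of_integrableOn (a := a) (fun x _ ↦ hderiv x)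
    ((hint (n + 2)).sub ((hint n).const_mul _)).integrableOn
    ((hint (n + 1)).const_mul _).integrableOn
  rw [integral_sub (hint (n + 2)).integrableOn ((hint n).const_mul _).integrableOn,
    integral_const_mul] at hFTC
  linear_combination hFTC

theorem integral_Ici_sub_sq_mul_gaussianWeight (hσ : σ ≠ 0) (c : ℝ) :
    ∫ x in Ici a, (x - c) ^ 2 * gaussianWeight μ σ x
      = σ ^ 2 * (∫ x in Ici a, gaussianWeight μ σ x) + σ ^ 2 * (a - μ) * gaussianWeight μ σ a
        + 2 * (μ - c) * (σ ^ 2 * gaussianWeight μ σ a)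
        + (μ - c) ^ 2 * ∫ x in Ici a, gaussianWeight μ σ x := by
  have h0 : IntegrableOn (gaussianWeight μ σ) (Ici a) := (integrable_gaussianWeight hσ).integrableOn
  have h1 : IntegrableOn (fun x ↦ (x - μ) * gaussianWeight μ σ x) (Ici a) :=
    (integrable_sub_mul_gaussianWeight hσ).integrableOn
  have h2 : IntegrableOn (fun x ↦ (x - μ) ^ 2 * gaussianWeight μ σ x) (Ici a) :=
    (integrable_sub_pow_mul_gaussianWeight hσ 2).integrableOn
  have hsplit : (fun x ↦ (x - c) ^ 2 * gaussianWeight μ σ x) = fun x ↦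
      ((x - μ) ^ 2 * gaussianWeight μ σ x + 2 * (μ - c) * ((x - μ) * gaussianWeight μ σ x))
        + (μ - c) ^ 2 * gaussianWeight μ σ x := by
    ext x; ring
  have hsecond := integral_Ici_sub_pow_add_two_mul_gaussianWeight (μ := μ) a hσ 0
  simp only [zero_add, pow_zero, pow_one, one_mul, Nat.cast_zero, mul_one] at hsecond
  have h21 : IntegrableOn (fun x ↦
      (x - μ) ^ 2 * gaussianWeight μ σ x + 2 * (μ - c) * ((x - μ) * gaussianWeight μ σ x))
      (Ici a) := h2.add (h1.const_mul _)
  rw [hsplit, integral_add h21 (h0.const_mul _),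
    integral_add h2 (h1.const_mul _), integral_const_mul, integral_const_mul, hsecond,
    integral_Ici_sub_mul_gaussianWeight a hσ]
  ring

end GaussianWeight

section TruncatedGaussian

variable (a μ : ℝ) {σ : ℝ}

theorem lZ_eq_integral_gaussianWeight : lZ a μ σ = ∫ x in Ici a, gaussianWeight μ σ x := rfl

theorem lZ_pos (hσ : σ ≠ 0) : 0 < lZ a μ σ := by
  have : NeZero (volume (Ici a)) := ⟨by simp⟩
  exact integral_exp_pos (integrable_gaussianWeight hσ).integrableOn

theorem lMean_mul_lZ (hσ : σ ≠ 0) :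
    lMean a μ σ * lZ a μ σ = μ * lZ a μ σ + σ ^ 2 * gaussianWeight μ σ a := by
  have h0 : IntegrableOn (gaussianWeight μ σ) (Ici a) := (integrable_gaussianWeight hσ).integrableOn
  have h1 : IntegrableOn (fun x ↦ (x - μ) * gaussianWeight μ σ x) (Ici a) :=
    (integrable_sub_mul_gaussianWeight hσ).integrableOn
  have hsplit : (fun x ↦ x * gaussianWeight μ σ x)
      = fun x ↦ (x - μ) * gaussianWeight μ σ x + μ * gaussianWeight μ σ x := by
    ext x; ring
  rw [lMean, div_mul_cancel₀ _ (lZ_pos a μ hσ).ne']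
  change ∫ x in Ici a, x * gaussianWeight μ σ x
    = μ * (∫ x in Ici a, gaussianWeight μ σ x) + σ ^ 2 * gaussianWeight μ σ a
  rw [hsplit, integral_add h1 (h0.const_mul μ), integral_const_mul,
    integral_Ici_sub_mul_gaussianWeight a hσ, add_comm]

theorem lVar_mul_lZ (hσ : σ ≠ 0) :
    lVar a μ σ * lZ a μ σ = ∫ x in Ici a, (x - lMean a μ σ) ^ 2 * gaussianWeight μ σ x := by
  rw [lVar, div_mul_cancel₀ _ (lZ_pos a μ hσ).ne']
  rfl

end TruncatedGaussian

/-- if the left-truncated Gaussian on `[a, ∞)` with parameters `μ, σ` has mean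
`M`, then its variance equals `σ² + (M − a)(μ − a) − (M − a)²`. -/
theorem lVar_eq_sigma_mu (a μ σ M : ℝ) (hσ : 0 < σ) (hM : lMean a μ σ = M) :
    lVar a μ σ = σ ^ 2 + (M - a) * (μ - a) - (M - a) ^ 2 := by
  have hZ : lZ a μ σ ≠ 0 := (lZ_pos a μ hσ.ne').ne'
  have hmean := lMean_mul_lZ a μ hσ.ne'
  have hvar := lVar_mul_lZ a μ hσ.ne'
  rw [integral_Ici_sub_sq_mul_gaussianWeight a hσ.ne', ← lZ_eq_integral_gaussianWeight, hM] at hvar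
  rw [hM] at hmean
  apply mul_right_cancel₀ hZ
  linear_combination hvar - (a - μ + 2 * (μ - M)) * hmean
end

section
/- Fix a ∈ ℝ and M > a, and let σ(M,r) = (M − a)·e^{r²/2}·ξ(r) / (r·e^{r²/2}·ξ(r) + √(2/π)) and Var(M,r) be the corresponding variance of the left-truncated Gaussian on [a, ∞) with mean M. Then lim_{r → 0} Var(M,r) = (M − a)²·(π − 2)/2 and lim_{r → 0} σ(M,r) = (M − a)·√(π/2). -/
open MeasureTheory Real Filter Set

@[fun_prop]
lemma continuous_erf : Continuous erf :=
  continuous_const.mul <| intervalIntegral.continuous_primitive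
    (fun _ _ => (by fun_prop : Continuous fun t : ℝ => exp (-t ^ 2)).intervalIntegrable _ _) 0

@[simp]
lemma erf_zero : erf 0 = 0 := by simp [erf]

@[fun_prop]
lemma continuous_xi : Continuous xi := by
  unfold xi
  fun_prop

@[simp]
lemma xi_zero : xi 0 = 1 := by simp [xi]

lemma continuousAt_sigmaMr (a M : ℝ) : ContinuousAt (sigmaMr a M) 0 := by
  unfold sigmaMr
  exact ContinuousAt.div (by fun_prop) (by fun_prop) (by simp [pi_pos.le, pi_ne_zero])

lemma continuousAt_varII (a M : ℝ) : ContinuousAt (varII a M) 0 := by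
  unfold varII
  exact ContinuousAt.div (by fun_prop) (by fun_prop) (by simp [pi_pos.le, pi_ne_zero])

lemma sigmaMr_zero (a M : ℝ) : sigmaMr a M 0 = (M - a) * √(π / 2) := by
  simp [sigmaMr, div_eq_mul_inv]

lemma varII_zero (a M : ℝ) : varII a M 0 = (M - a) ^ 2 * (π - 2) / 2 := by
  simp [varII, div_pow, pi_pos.le, mul_div_cancel₀ _ pi_ne_zero]

theorem tendsto_varII_sigmaMr_zero_general (a M : ℝ) :
    Filter.Tendsto (fun r : ℝ => varII a M r) (nhds 0)
        (nhds ((M - a) ^ 2 * (Real.pi - 2) / 2)) ∧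
      Filter.Tendsto (fun r : ℝ => sigmaMr a M r) (nhds 0)
        (nhds ((M - a) * Real.sqrt (Real.pi / 2))) :=
  ⟨varII_zero a M ▸ (continuousAt_varII a M).tendsto,
    sigmaMr_zero a M ▸ (continuousAt_sigmaMr a M).tendsto⟩

/-- `Var(M,r) → (M − a)²·(π − 2)/2` and `σ(M,r) → (M − a)·√(π/2)` as `r → 0`. -/
theorem tendsto_varII_sigmaMr_zero (a M : ℝ) (hM : a < M) :
    Filter.Tendsto (fun r : ℝ => varII a M r) (nhds 0)
        (nhds ((M - a) ^ 2 * (Real.pi - 2) / 2)) ∧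
      Filter.Tendsto (fun r : ℝ => sigmaMr a M r) (nhds 0)
        (nhds ((M - a) * Real.sqrt (Real.pi / 2))) :=
  tendsto_varII_sigmaMr_zero_general a M
end
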